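/- For μ ≥ η > 0 and ν > 0, the new SPEB after adding ranging information satisfies 1/μ < tr((F(μ,η,ϑ) + ν R(φ))⁻¹) ≤ tr(F(μ,η,ϑ)⁻¹) = 1/μ + 1/η for every angle φ. -/

import Mathlib

open Matrix Real

noncomputable def rotM (ϑ : ℝ) : Matrix (Fin 2) (Fin 2) ℝ :=
  !![cos ϑ, -sin ϑ; sin ϑ, cos ϑ]

noncomputable def RDM (φ : ℝ) : Matrix (Fin 2) (Fin 2) ℝ :=
  vecMulVec ![cos φ, sin φ] ![cos φ, sin φ]

noncomputable def Fmat (μ η ϑ : ℝ) : Matrix (Fin 2) (Fin 2) ℝ :=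
  rotM ϑ * Matrix.diagonal ![μ, η] * (rotM ϑ)ᵀ

/-!
Conjugating by the rotation `U_ϑ` preserves trace and determinant, and turns
`F(μ,η,ϑ) + ν R(φ)` into `diag(μ,η) + ν R(φ - ϑ)`, whose trace is `μ + η + ν` and whose
determinant is `μη + ν(μ sin²ψ + η cos²ψ)` with `ψ = φ - ϑ`. For a `2 × 2` matrix
`tr A⁻¹ = tr A / det A`. Clearing denominators and using `sin²ψ + cos²ψ = 1`, the lower
bound becomes `μ² + ν(μ - η)cos²ψ > 0` and the upper bound `ν(μ²sin²ψ + η²cos²ψ) ≥ 0`.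
-/

theorem Matrix.trace_inv_fin_two {K : Type*} [Field K] (A : Matrix (Fin 2) (Fin 2) K) :
    A⁻¹.trace = A.trace / A.det := by
  rw [inv_def, trace_smul, Ring.inverse_eq_inv', adjugate_fin_two, trace_fin_two, trace_fin_two,
    smul_eq_mul, div_eq_inv_mul]
  simp only [of_apply, cons_val', cons_val_zero, cons_val_one, empty_val', cons_val_fin_one]
  ring

theorem Matrix.trace_mul_mul_of_mul_eq_one {m n R : Type*} [Fintype m] [Fintype n]
    [DecidableEq n] [CommSemiring R] {M : Matrix m n R} {M' : Matrix n m R} (N : Matrix n n R)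
    (h : M' * M = 1) : (M * N * M').trace = N.trace := by
  rw [trace_mul_comm, ← Matrix.mul_assoc, h, Matrix.one_mul]

theorem rotM_mul_transpose (ϑ : ℝ) : rotM ϑ * (rotM ϑ)ᵀ = 1 := by
  ext i j
  fin_cases i <;> fin_cases j <;> simp [rotM, mul_apply, ← sq] <;> ring

theorem transpose_mul_rotM (ϑ : ℝ) : (rotM ϑ)ᵀ * rotM ϑ = 1 := by
  ext i j
  fin_cases i <;> fin_cases j <;> simp [rotM, mul_apply, ← sq] <;> ring

theorem rotM_mulVec (ϑ ψ : ℝ) :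
    rotM ϑ *ᵥ ![cos ψ, sin ψ] = ![cos (ψ + ϑ), sin (ψ + ϑ)] := by
  ext i
  fin_cases i <;> simp [rotM, cos_add, sin_add] <;> ring

theorem rotM_mul_RDM_mul_transpose (ϑ ψ : ℝ) :
    rotM ϑ * RDM ψ * (rotM ϑ)ᵀ = RDM (ψ + ϑ) := by
  rw [RDM, mul_vecMulVec, vecMulVec_mul, vecMul_transpose, rotM_mulVec, RDM]

theorem Fmat_add_smul_RDM (μ η ϑ ν φ : ℝ) :
    Fmat μ η ϑ + ν • RDM φ = rotM ϑ * (diagonal ![μ, η] + ν • RDM (φ - ϑ)) * (rotM ϑ)ᵀ := by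
  rw [Matrix.mul_add, Matrix.add_mul, Matrix.mul_smul, Matrix.smul_mul,
    rotM_mul_RDM_mul_transpose, sub_add_cancel, Fmat]

theorem trace_diagonal_add_smul_RDM (μ η ν ψ : ℝ) :
    (diagonal ![μ, η] + ν • RDM ψ).trace = μ + η + ν := by
  rw [trace_add, trace_smul, trace_diagonal, RDM, trace_vecMulVec, Fin.sum_univ_two,
    dotProduct_cons, dotProduct_cons]
  simp only [cons_val_zero, cons_val_one, head_cons, tail_cons, dotProduct_of_isEmpty, add_zero,
    smul_eq_mul]
  linear_combination ν * cos_sq_add_sin_sq ψ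

theorem det_diagonal_add_smul_RDM (μ η ν ψ : ℝ) :
    (diagonal ![μ, η] + ν • RDM ψ).det = μ * η + ν * (μ * sin ψ ^ 2 + η * cos ψ ^ 2) := by
  simp [RDM, det_fin_two]
  ring

/-- `tr((diag(μ,η) + ν R(ψ))⁻¹)` in closed form; `ψ` is the angle between the ranging direction
and the eigenvector of `F` for `μ`. -/
noncomputable def speb (μ η ν ψ : ℝ) : ℝ :=
  (μ + η + ν) / (μ * η + ν * (μ * sin ψ ^ 2 + η * cos ψ ^ 2))

theorem trace_inv_Fmat_add_smul_RDM (μ η ϑ ν φ : ℝ) :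
    (Fmat μ η ϑ + ν • RDM φ)⁻¹.trace = speb μ η ν (φ - ϑ) := by
  rw [trace_inv_fin_two, Fmat_add_smul_RDM,
    trace_mul_mul_of_mul_eq_one _ (transpose_mul_rotM ϑ),
    det_conj_of_mul_eq_one (rotM_mul_transpose ϑ) (transpose_mul_rotM ϑ),
    trace_diagonal_add_smul_RDM, det_diagonal_add_smul_RDM, speb]

theorem speb_zero {μ η : ℝ} (hμ : μ ≠ 0) (hη : η ≠ 0) (ψ : ℝ) :
    speb μ η 0 ψ = 1 / μ + 1 / η := by
  rw [speb]
  field_simp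
  ring

theorem one_div_lt_speb {μ η ν : ℝ} (hμη : η ≤ μ) (hη : 0 < η) (hν : 0 < ν) (ψ : ℝ) :
    1 / μ < speb μ η ν ψ := by
  have hμ : 0 < μ := hη.trans_le hμη
  have hden : 0 < μ * η + ν * (μ * sin ψ ^ 2 + η * cos ψ ^ 2) := by positivity
  rw [speb, div_lt_div_iff₀ hμ hden]
  have key : (μ + η + ν) * μ - 1 * (μ * η + ν * (μ * sin ψ ^ 2 + η * cos ψ ^ 2))
      = μ ^ 2 + ν * (μ - η) * cos ψ ^ 2 := by
    linear_combination -(ν * μ) * sin_sq_add_cos_sq ψ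
  have := mul_nonneg (mul_nonneg hν.le (sub_nonneg.2 hμη)) (sq_nonneg (cos ψ))
  have : 0 < μ ^ 2 := by positivity
  linarith

theorem speb_le_speb_zero {μ η ν : ℝ} (hμ : 0 < μ) (hη : 0 < η) (hν : 0 ≤ ν) (ψ : ℝ) :
    speb μ η ν ψ ≤ speb μ η 0 ψ := by
  have hden : 0 < μ * η + ν * (μ * sin ψ ^ 2 + η * cos ψ ^ 2) := by positivity
  rw [speb, speb, zero_mul, add_zero, add_zero, div_le_div_iff₀ hden (by positivity)]
  have key : (μ + η) * (μ * η + ν * (μ * sin ψ ^ 2 + η * cos ψ ^ 2)) - (μ + η + ν) * (μ * η)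
      = ν * ((μ * sin ψ) ^ 2 + (η * cos ψ) ^ 2) := by
    linear_combination (ν * μ * η) * sin_sq_add_cos_sq ψ
  have : 0 ≤ ν * ((μ * sin ψ) ^ 2 + (η * cos ψ) ^ 2) := by positivity
  linarith

theorem speb_bounds_after_cooperation (μ η ϑ ν : ℝ) (hμη : μ ≥ η) (hη : 0 < η)
    (hν : 0 < ν) (φ : ℝ) :
    1 / μ < ((Fmat μ η ϑ + ν • RDM φ)⁻¹).trace ∧
    ((Fmat μ η ϑ + ν • RDM φ)⁻¹).trace ≤ ((Fmat μ η ϑ)⁻¹).trace ∧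
    ((Fmat μ η ϑ)⁻¹).trace = 1 / μ + 1 / η := by
  have hμ : 0 < μ := hη.trans_le hμη
  have hF : (Fmat μ η ϑ)⁻¹.trace = speb μ η 0 (φ - ϑ) := by
    simpa using trace_inv_Fmat_add_smul_RDM μ η ϑ 0 φ
  rw [hF, trace_inv_Fmat_add_smul_RDM]
  exact ⟨one_div_lt_speb hμη hη hν _, speb_le_speb_zero hμ hη hν.le _,
    speb_zero hμ.ne' hη.ne' _⟩
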